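/- (Bounded jumps and risk lower bound at symmetric arguments.) Fix j ∈ {1,…,m} and β ≥ 0 such that for every i ∈ {1,…,n+1}, L_j^{(i)}(λ_1^min,…,λ_j^min) > β almost surely. Then for any symmetric functions Γ_1,…,Γ_{j−1} of the n+1 datapoints taking values in Λ_1,…,Λ_{j−1} respectively: almost surely g_j^sym(U_j^sym(Γ_1,…,Γ_{j−1}; β); Γ_1,…,Γ_{j−1}) ≥ β − Vmax_j/(n+1), and consequently E[L_j^{(n+1)}(Γ_1,…,Γ_{j−1}, U_j^sym(Γ_1,…,Γ_{j−1}; β))] ≥ β − Vmax_j/(n+1). -/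

import Mathlib

/-!
For fixed data, `x ↦ g_j^sym(x; Γ)` is a right-continuous step function whose downward jumps sit
at the scores `S_j^{(i)}`; with distinct scores each jump is at most `Vmax_j / (n + 1)`. Since
every datapoint has loss above `b` at `λ^min`, the superlevel set `{g > b}` contains `λ_j^min`,
and approaching its supremum `U` from the left gives `g(U) ≥ b - Vmax_j / (n + 1)`.

For the expectation, the loss of datapoint `i` at `(Γ, U)` is a measurable, permutation-equivariant
function of the data (`U` is measurable because right-continuity lets the supremum be taken over
rationals), so by exchangeability all datapoints have the same expected loss, which is therefore
the expectation of `g_j^sym`.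
-/

open MeasureTheory Set

attribute [local instance] Classical.propDecidable

noncomputable section

/-- The loss `L_j^{(i)}(λ_{1:j}) = V_j^{(i)} · 1{S_1^{(i)} ≤ λ_1, …, S_{j−1}^{(i)} ≤ λ_{j−1},
S_j^{(i)} > λ_j}`.  Only the coordinates `ℓ ≤ j` of the vector `lam` are read. -/
def lossFn {Ω : Type*} {m n : ℕ} (S V : Fin (n + 1) → Fin m → Ω → ℝ)
    (j : Fin m) (i : Fin (n + 1)) (lam : Fin m → ℝ) (ω : Ω) : ℝ :=
  V i j ω * (if (∀ l, l < j → S i l ω ≤ lam l) ∧ lam j < S i j ω then 1 else 0)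

/-- The symmetric oracle risk `g_j^sym(λ_j; λ_{1:(j−1)})`. -/
def gSym {Ω : Type*} {m n : ℕ} (S V : Fin (n + 1) → Fin m → Ω → ℝ)
    (j : Fin m) (lam : Fin m → ℝ) (ω : Ω) : ℝ :=
  (1 / ((n : ℝ) + 1)) * ∑ i : Fin (n + 1), lossFn S V j i lam ω

/-- The bumped empirical risk `g_j^+(λ_j; λ_{1:(j−1)})`. -/
def gPlus {Ω : Type*} {m n : ℕ} (S V : Fin (n + 1) → Fin m → Ω → ℝ) (Vmax : Fin m → ℝ)
    (j : Fin m) (lam : Fin m → ℝ) (ω : Ω) : ℝ :=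
  (1 / ((n : ℝ) + 1)) * ∑ i : Fin n, lossFn S V j i.castSucc lam ω + Vmax j / ((n : ℝ) + 1)

/-- `U_j^sym(λ_{1:(j−1)}; b) = sup{x ∈ Λ_j : g_j^sym(x; λ_{1:(j−1)}) > b}`, the supremum of the
empty set being `λ_j^min` (implemented by inserting `λ_j^min` into the set, which does not change
the supremum of a nonempty subset of `Λ_j`). -/
def USym {Ω : Type*} {m n : ℕ} (S V : Fin (n + 1) → Fin m → Ω → ℝ)
    (lamMin lamMax : Fin m → ℝ) (j : Fin m) (lam : Fin m → ℝ) (b : ℝ) (ω : Ω) : ℝ :=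
  sSup (insert (lamMin j)
    {x | x ∈ Icc (lamMin j) (lamMax j) ∧ b < gSym S V j (Function.update lam j x) ω})

/-- `U_j^+(λ_{1:(j−1)}; b) = inf{x ∈ Λ_j : g_j^+(x; λ_{1:(j−1)}) ≤ b}`, the infimum of the
empty set being `λ_j^max`. -/
def UPlus {Ω : Type*} {m n : ℕ} (S V : Fin (n + 1) → Fin m → Ω → ℝ) (Vmax : Fin m → ℝ)
    (lamMin lamMax : Fin m → ℝ) (j : Fin m) (lam : Fin m → ℝ) (b : ℝ) (ω : Ω) : ℝ :=
  sInf (insert (lamMax j)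
    {x | x ∈ Icc (lamMin j) (lamMax j) ∧ gPlus S V Vmax j (Function.update lam j x) ω ≤ b})

/-- The odd-indexed MULTIRISK thresholds: `lamOdd … j k = λ̂_j^{(2k−1)}
= U_j^sym(λ̂_1^{(2k+1)},…,λ̂_{j−1}^{(2k+1)}; β_j^{(k−1)})`, with `β_j^{(k)} = β_j − k·δ_j`
and `δ_j = (Vmax_j − Vmin_j)/(n+1)`. -/
def lamOdd {Ω : Type*} {m n : ℕ} (S V : Fin (n + 1) → Fin m → Ω → ℝ)
    (lamMin lamMax Vmin Vmax β : Fin m → ℝ) (j : Fin m) (k : ℕ) (ω : Ω) : ℝ :=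
  USym S V lamMin lamMax j
    (fun ℓ => if hl : ℓ < j then lamOdd S V lamMin lamMax Vmin Vmax β ℓ (k + 1) ω else 0)
    (β j - ((k : ℝ) - 1) * ((Vmax j - Vmin j) / ((n : ℝ) + 1))) ω
termination_by j.val
decreasing_by exact hl

/-- The even-indexed MULTIRISK thresholds: `lamEven … j k = λ̂_j^{(2k)}
= U_j^+(λ̂_1^{(2k+2)},…,λ̂_{j−1}^{(2k+2)}; β_j^{(k−1)})`.  In particular `lamEven … j 1` is the
MULTIRISK threshold `λ̂_j^{(2)}`. -/
def lamEven {Ω : Type*} {m n : ℕ} (S V : Fin (n + 1) → Fin m → Ω → ℝ)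
    (lamMin lamMax Vmin Vmax β : Fin m → ℝ) (j : Fin m) (k : ℕ) (ω : Ω) : ℝ :=
  UPlus S V Vmax lamMin lamMax j
    (fun ℓ => if hl : ℓ < j then lamEven S V lamMin lamMax Vmin Vmax β ℓ (k + 1) ω else 0)
    (β j - ((k : ℝ) - 1) * ((Vmax j - Vmin j) / ((n : ℝ) + 1))) ω
termination_by j.val
decreasing_by exact hl

open Filter Topology Function

theorem sub_le_apply_csSup {f : ℝ → ℝ} {A : Set ℝ} {b δ : ℝ} (hne : A.Nonempty)
    (hbdd : BddAbove A) (hA : ∀ x ∈ A, b < f x)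
    (hjump : ∀ᶠ x in 𝓝[≤] sSup A, f x - f (sSup A) ≤ δ) : b - δ ≤ f (sSup A) := by
  obtain ⟨x, hxA, hx⟩ := (((isLUB_csSup hne hbdd).frequently_mem hne).and_eventually hjump).exists
  linarith [hA x hxA]

theorem sum_ite_lt_sub_sum_ite_lt_le {ι : Type*} [Fintype ι] {s : ι → ℝ} (hs : Injective s)
    {a : ι → ℝ} {c : ℝ} (hc : 0 ≤ c) (ha : ∀ i, a i ≤ c) {x u : ℝ} (hxu : x ≤ u)
    (hx : ∀ i, s i < u → s i < x) :
    (∑ i, if x < s i then a i else 0) - ∑ i, (if u < s i then a i else 0) ≤ c := by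
  classical
  rw [← Finset.sum_sub_distrib]
  calc _ ≤ ∑ i, if s i = u then c else 0 := Finset.sum_le_sum fun i _ => by
        rcases lt_trichotomy (s i) u with h | h | h
        · simp [(hx i h).not_gt, h.not_gt, h.ne]
        · simp only [h, lt_irrefl, if_true, if_false, sub_zero]
          split_ifs <;> linarith [ha i]
        · simp [h.ne', h, hxu.trans_lt h]
    _ = ∑ y ∈ Finset.univ.image s, if y = u then c else 0 :=
        (Finset.sum_image (f := fun y => if y = u then c else 0) fun _ _ _ _ h => hs h).symm
    _ ≤ c := by rw [Finset.sum_ite_eq']; split_ifs <;> linarith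

theorem eventually_nhdsGT_lt_iff (x s : ℝ) : ∀ᶠ y in 𝓝[>] x, (y < s ↔ x < s) := by
  rcases lt_or_ge x s with h | h
  · filter_upwards [Ioo_mem_nhdsGT h] with y hy using iff_of_true hy.2 h
  · filter_upwards [self_mem_nhdsWithin] with y hy
    exact iff_of_false (fun hys => (h.trans_lt (hy.trans hys)).false) h.not_gt

theorem eventually_nhdsLE_lt_of_lt (s u : ℝ) : ∀ᶠ x in 𝓝[≤] u, s < u → s < x := by
  by_cases h : s < u
  · filter_upwards [nhdsWithin_le_nhds (Ioi_mem_nhds h)] with x hx using fun _ => hx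
  · exact .of_forall fun _ h' => absurd h' h

theorem measurable_csSup_of_eventually_mem {δ : Type*} [MeasurableSpace δ] {A : δ → Set ℝ}
    {C : Set ℝ} (hC : C.Countable) (hne : ∀ d, (A d).Nonempty) (hbdd : ∀ d, BddAbove (A d))
    (hmeas : ∀ x, MeasurableSet {d | x ∈ A d})
    (hright : ∀ d, ∀ x ∈ A d, x ∉ C → ∀ᶠ y in 𝓝[>] x, y ∈ A d) :
    Measurable fun d => sSup (A d) := by
  refine measurable_of_Ioi fun t => ?_
  have hpre : (fun d => sSup (A d)) ⁻¹' Ioi t =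
      ⋃ x ∈ C ∪ range ((↑) : ℚ → ℝ), {d | x ∈ A d} ∩ {_d | t < x} := by
    ext d
    simp only [mem_preimage, mem_Ioi, mem_iUnion, mem_inter_iff, mem_ofPred_eq, exists_prop]
    constructor
    · intro ht
      obtain ⟨x, hx, htx⟩ := exists_lt_of_lt_csSup (hne d) ht
      by_cases hxC : x ∈ C
      · exact ⟨x, .inl hxC, hx, htx⟩
      obtain ⟨u, hxu, hu⟩ := mem_nhdsGT_iff_exists_Ioo_subset.1 (hright d x hx hxC)
      obtain ⟨q, hxq, hqu⟩ := exists_rat_btwn (mem_Ioi.1 hxu)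
      exact ⟨q, .inr ⟨q, rfl⟩, hu ⟨hxq, hqu⟩, htx.trans hxq⟩
    · rintro ⟨x, -, hx, htx⟩
      exact htx.trans_le (le_csSup (hbdd d) hx)
  rw [hpre]
  exact .biUnion (hC.union (countable_range _)) fun x _ => (hmeas x).inter (.const _)

section Loss

variable {Ω : Type*} {m n : ℕ} (S V : Fin (n + 1) → Fin m → Ω → ℝ) (j : Fin m)

theorem abs_lossFn_le (i : Fin (n + 1)) (lam : Fin m → ℝ) (ω : Ω) :
    |lossFn S V j i lam ω| ≤ |V i j ω| := by
  unfold lossFn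
  split_ifs <;> simp

theorem lossFn_update_self (i : Fin (n + 1)) (lam : Fin m → ℝ) (x : ℝ) (ω : Ω) :
    lossFn S V j i (update lam j x) ω =
      if x < S i j ω then V i j ω * (if ∀ l, l < j → S i l ω ≤ lam l then 1 else 0) else 0 := by
  have hprefix : (∀ l, l < j → S i l ω ≤ update lam j x l) ↔ ∀ l, l < j → S i l ω ≤ lam l :=
    forall₂_congr fun l hl => by rw [update_of_ne hl.ne]
  simp only [lossFn, update_self, hprefix]
  split_ifs <;> simp_all

theorem lossFn_update_congr {lam lam' : Fin m → ℝ} (h : ∀ l, l < j → lam l = lam' l)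
    (i : Fin (n + 1)) (x : ℝ) (ω : Ω) :
    lossFn S V j i (update lam j x) ω = lossFn S V j i (update lam' j x) ω := by
  simp +contextual only [lossFn_update_self, h]

theorem gSym_update_congr {lam lam' : Fin m → ℝ} (h : ∀ l, l < j → lam l = lam' l)
    (x : ℝ) (ω : Ω) :
    gSym S V j (update lam j x) ω = gSym S V j (update lam' j x) ω := by
  simp only [gSym, lossFn_update_congr S V j h]

theorem USym_congr (lamMin lamMax : Fin m → ℝ) {lam lam' : Fin m → ℝ}
    (h : ∀ l, l < j → lam l = lam' l) (b : ℝ) (ω : Ω) :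
    USym S V lamMin lamMax j lam b ω = USym S V lamMin lamMax j lam' b ω := by
  simp only [USym, gSym_update_congr S V j h]

theorem gSym_perm (π : Equiv.Perm (Fin (n + 1))) (lam : Fin m → ℝ) (ω : Ω) :
    gSym (fun i => S (π i)) (fun i => V (π i)) j lam ω = gSym S V j lam ω :=
  congrArg _ (Equiv.sum_comp π fun i => lossFn S V j i lam ω)

theorem USym_perm (π : Equiv.Perm (Fin (n + 1))) (lamMin lamMax lam : Fin m → ℝ) (b : ℝ)
    (ω : Ω) :
    USym (fun i => S (π i)) (fun i => V (π i)) lamMin lamMax j lam b ω =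
      USym S V lamMin lamMax j lam b ω := by
  simp only [USym, gSym_perm]

theorem gSym_eq_sum_div (lam : Fin m → ℝ) (ω : Ω) :
    gSym S V j lam ω = (∑ i, lossFn S V j i lam ω) / (Fintype.card (Fin (n + 1)) : ℝ) := by
  rw [gSym, Fintype.card_fin, Nat.cast_succ, one_div_mul_eq_div]

theorem lt_gSym_of_forall_lt {lam : Fin m → ℝ} {b : ℝ} {ω : Ω}
    (h : ∀ i, b < lossFn S V j i lam ω) : b < gSym S V j lam ω := by
  have hsum := Finset.sum_lt_sum_of_nonempty Finset.univ_nonempty fun i _ => h i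
  rw [Finset.sum_const, Finset.card_univ, Fintype.card_fin, nsmul_eq_mul] at hsum
  rw [gSym, one_div, lt_inv_mul_iff₀ (by positivity)]
  push_cast at hsum
  linarith

theorem eventually_nhdsGT_gSym_update_eq (lam : Fin m → ℝ) (x : ℝ) (ω : Ω) :
    ∀ᶠ y in 𝓝[>] x, gSym S V j (update lam j y) ω = gSym S V j (update lam j x) ω := by
  filter_upwards [eventually_all.2 fun i => eventually_nhdsGT_lt_iff x (S i j ω)] with y hy
  simp only [gSym, lossFn_update_self, hy]

theorem eventually_nhdsLE_gSym_update_sub_le {ω : Ω} (hS : Injective fun i => S i j ω) {c : ℝ}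
    (hc : 0 ≤ c) (hV : ∀ i, V i j ω ≤ c) (lam : Fin m → ℝ) (u : ℝ) :
    ∀ᶠ x in 𝓝[≤] u,
      gSym S V j (update lam j x) ω - gSym S V j (update lam j u) ω ≤ c / ((n : ℝ) + 1) := by
  filter_upwards [self_mem_nhdsWithin,
    eventually_all.2 fun i => eventually_nhdsLE_lt_of_lt (S i j ω) u] with x hxu hx
  have ha : ∀ i, V i j ω * (if ∀ l, l < j → S i l ω ≤ lam l then 1 else 0) ≤ c := fun i => by
    split_ifs <;> linarith [hV i]
  have hjump := sum_ite_lt_sub_sum_ite_lt_le hS hc ha hxu hx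
  simp only [gSym, lossFn_update_self, ← mul_sub]
  rw [mul_comm, ← div_eq_mul_one_div]
  exact div_le_div_of_nonneg_right hjump (by positivity)

theorem sub_le_gSym_update_USym {lamMin lamMax lam : Fin m → ℝ} {b c : ℝ} {ω : Ω} (hb : 0 ≤ b)
    (hlam : ∀ l, l < j → lamMin l ≤ lam l) (hS : Injective fun i => S i j ω)
    (hV : ∀ i, V i j ω ≤ c) (hlow : ∀ i, b < lossFn S V j i lamMin ω) :
    b - c / ((n : ℝ) + 1) ≤ gSym S V j (update lam j (USym S V lamMin lamMax j lam b ω)) ω := by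
  have hactive : ∀ i, (∀ l, l < j → S i l ω ≤ lamMin l) ∧ lamMin j < S i j ω ∧ b < V i j ω := by
    intro i
    have h := hlow i
    unfold lossFn at h
    split_ifs at h with hi
    · exact ⟨hi.1, hi.2, by simpa using h⟩
    · linarith
  have hc : 0 ≤ c := hb.trans ((hactive 0).2.2.le.trans (hV 0))
  have hmin : b < gSym S V j (update lam j (lamMin j)) ω := by
    refine lt_gSym_of_forall_lt S V j fun i => ?_
    obtain ⟨hpre, hlt, hbV⟩ := hactive i
    rwa [lossFn_update_self, if_pos hlt, if_pos fun l hl => (hpre l hl).trans (hlam l hl),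
      mul_one]
  refine sub_le_apply_csSup (insert_nonempty _ _)
    ((bddAbove_Icc.mono fun _ hx => hx.1).insert _) ?_
    (eventually_nhdsLE_gSym_update_sub_le S V j hS hc hV lam _)
  rintro x (rfl | hx)
  exacts [hmin, hx.2]

variable [MeasurableSpace Ω]

theorem measurable_lossFn (hS : ∀ i l, Measurable (S i l)) (hV : ∀ i l, Measurable (V i l))
    {lam : Ω → Fin m → ℝ} (hlam : Measurable lam) (i : Fin (n + 1)) :
    Measurable fun ω => lossFn S V j i (lam ω) ω := by
  have hactive : MeasurableSet
      {ω | (∀ l, l < j → S i l ω ≤ lam ω l) ∧ lam ω j < S i j ω} := by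
    simp only [measurableSet_setOfPred]
    fun_prop
  exact (hV i j).mul (Measurable.ite hactive measurable_const measurable_const)

theorem measurable_gSym (hS : ∀ i l, Measurable (S i l)) (hV : ∀ i l, Measurable (V i l))
    {lam : Ω → Fin m → ℝ} (hlam : Measurable lam) :
    Measurable fun ω => gSym S V j (lam ω) ω :=
  (Finset.measurable_sum _ fun i _ => measurable_lossFn S V j hS hV hlam i).const_mul _

theorem measurable_USym (hS : ∀ i l, Measurable (S i l)) (hV : ∀ i l, Measurable (V i l))
    (lamMin lamMax : Fin m → ℝ) {lam : Ω → Fin m → ℝ} (hlam : Measurable lam) (b : ℝ) :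
    Measurable fun ω => USym S V lamMin lamMax j (lam ω) b ω := by
  refine measurable_csSup_of_eventually_mem (C := {lamMin j, lamMax j}) (toFinite _).countable
    (fun _ => insert_nonempty _ _) (fun _ => (bddAbove_Icc.mono fun _ hx => hx.1).insert _)
    (fun x => ?_) ?_
  · have hg := measurable_gSym S V j hS hV (lam := fun ω => update (lam ω) j x) (by fun_prop)
    exact (MeasurableSet.const _).union
      ((MeasurableSet.const _).inter (measurableSet_lt measurable_const hg))
  · rintro ω x (rfl | ⟨⟨hlo, hhi⟩, hx⟩) hxC
    · exact absurd (mem_insert _ _) hxC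
    have hlt : x < lamMax j := hhi.lt_of_ne fun h => hxC (h ▸ mem_insert_of_mem _ rfl)
    filter_upwards [self_mem_nhdsWithin, nhdsWithin_le_nhds (Iio_mem_nhds hlt),
      eventually_nhdsGT_gSym_update_eq S V j (lam ω) x ω] with y hxy hy hg
    exact .inr ⟨⟨hlo.trans hxy.le, hy.le⟩, hg ▸ hx⟩

end Loss

section Exchangeable

variable {Ω ι E : Type*} [MeasurableSpace Ω] [MeasurableSpace E] {μ : Measure Ω}
  {X : Ω → ι → E} {F : ι → (ι → E) → ℝ}

theorem integral_comp_eq_of_exchangeable (hX : Measurable X)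
    (hexch : ∀ π : Equiv.Perm ι, μ.map (fun ω k => X ω (π k)) = μ.map X)
    (hF : ∀ i, Measurable (F i))
    (hFπ : ∀ (π : Equiv.Perm ι) i x, F i (fun k => x (π k)) = F (π i) x) (i i' : ι) :
    ∫ ω, F i (X ω) ∂μ = ∫ ω, F i' (X ω) ∂μ := by
  classical
  have hXπ : Measurable fun ω k => X ω (Equiv.swap i i' k) := by fun_prop
  rw [← integral_map hX.aemeasurable (hF i).aestronglyMeasurable, ← hexch (Equiv.swap i i'),
    integral_map hXπ.aemeasurable (hF i).aestronglyMeasurable]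
  simp only [hFπ, Equiv.swap_apply_left]

theorem le_integral_of_exchangeable [IsProbabilityMeasure μ] [Fintype ι] (hX : Measurable X)
    (hexch : ∀ π : Equiv.Perm ι, μ.map (fun ω k => X ω (π k)) = μ.map X)
    (hF : ∀ i, Measurable (F i))
    (hFπ : ∀ (π : Equiv.Perm ι) i x, F i (fun k => x (π k)) = F (π i) x)
    (hint : ∀ i, Integrable (fun ω => F i (X ω)) μ) {c : ℝ}
    (hc : ∀ᵐ ω ∂μ, c ≤ (∑ i, F i (X ω)) / Fintype.card ι) (i₀ : ι) :
    c ≤ ∫ ω, F i₀ (X ω) ∂μ := by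
  have : Nonempty ι := ⟨i₀⟩
  have hcard : (Fintype.card ι : ℝ) ≠ 0 := Nat.cast_ne_zero.2 Fintype.card_ne_zero
  have hmean : ∫ ω, (∑ i, F i (X ω)) / Fintype.card ι ∂μ = ∫ ω, F i₀ (X ω) ∂μ := by
    rw [integral_div, integral_finsetSum _ fun i _ => hint i,
      Finset.sum_congr rfl fun i _ => integral_comp_eq_of_exchangeable hX hexch hF hFπ i i₀,
      Finset.sum_const, Finset.card_univ, nsmul_eq_mul, mul_div_cancel_left₀ _ hcard]
  calc c = ∫ _ω, c ∂μ := by simp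
    _ ≤ ∫ ω, (∑ i, F i (X ω)) / Fintype.card ι ∂μ :=
      integral_mono_ae (integrable_const c)
        ((integrable_finsetSum _ fun i _ => hint i).div_const _) hc
    _ = ∫ ω, F i₀ (X ω) ∂μ := hmean

end Exchangeable

/-- The canonical space of the `n + 1` datapoints, on which exchangeability is a property of
the law of the data. -/
abbrev Sample (m n : ℕ) := Fin (n + 1) → (Fin m → ℝ) × (Fin m → ℝ)

namespace Sample

variable {m n : ℕ}

def score (i : Fin (n + 1)) (l : Fin m) (d : Sample m n) : ℝ := (d i).1 l

def cost (i : Fin (n + 1)) (l : Fin m) (d : Sample m n) : ℝ := (d i).2 l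

theorem measurable_score (i : Fin (n + 1)) (l : Fin m) : Measurable (score (m := m) i l) := by
  unfold score
  fun_prop

theorem measurable_cost (i : Fin (n + 1)) (l : Fin m) : Measurable (cost (m := m) i l) := by
  unfold cost
  fun_prop

def lossAtUSym (lamMin lamMax : Fin m → ℝ) (j : Fin m) (b : ℝ)
    (φ : Fin m → Sample m n → ℝ) (i : Fin (n + 1)) (d : Sample m n) : ℝ :=
  lossFn score cost j i (update (φ · d) j (USym score cost lamMin lamMax j (φ · d) b d)) d

variable (lamMin lamMax : Fin m → ℝ) (j : Fin m) (b : ℝ) {φ : Fin m → Sample m n → ℝ}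

theorem measurable_lossAtUSym (hφ : ∀ l, Measurable (φ l)) (i : Fin (n + 1)) :
    Measurable (lossAtUSym lamMin lamMax j b φ i) := by
  have hlam : Measurable fun d l => φ l d := measurable_pi_lambda _ hφ
  have hU := measurable_USym score cost j measurable_score measurable_cost lamMin lamMax hlam b
  exact measurable_lossFn score cost j measurable_score measurable_cost
    (measurable_update'.comp (hlam.prodMk hU)) i

theorem lossAtUSym_perm
    (hφ : ∀ l (π : Equiv.Perm (Fin (n + 1))) d, φ l (fun k => d (π k)) = φ l d)
    (π : Equiv.Perm (Fin (n + 1))) (i : Fin (n + 1)) (d : Sample m n) :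
    lossAtUSym lamMin lamMax j b φ i (fun k => d (π k)) =
      lossAtUSym lamMin lamMax j b φ (π i) d := by
  simp only [lossAtUSym, hφ]
  exact congrArg (fun x => lossFn score cost j (π i) (update (φ · d) j x) d)
    (USym_perm score cost j π lamMin lamMax _ b d)

end Sample

theorem bounded_jumps_risk_lower_bound_general
    {Ω : Type*} [MeasurableSpace Ω] (μ : Measure Ω) [IsProbabilityMeasure μ]
    (m n : ℕ)
    (S V : Fin (n + 1) → Fin m → Ω → ℝ)
    (hSmeas : ∀ i j, Measurable (S i j)) (hVmeas : ∀ i j, Measurable (V i j))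
    (lamMin lamMax : Fin m → ℝ)
    (Vmin Vmax : Fin m → ℝ)
    (hVbd : ∀ i j, ∀ᵐ ω ∂μ, V i j ω ∈ Icc (Vmin j) (Vmax j))
    (hexch : ∀ π : Equiv.Perm (Fin (n + 1)),
      Measure.map (fun ω => fun i : Fin (n + 1) =>
          ((fun j => S (π i) j ω), (fun j => V (π i) j ω))) μ
        = Measure.map (fun ω => fun i : Fin (n + 1) =>
          ((fun j => S i j ω), (fun j => V i j ω))) μ)
    -- distinct continuous scores
    (hdist : ∀ j : Fin m, ∀ᵐ ω ∂μ,
      ∀ i i' : Fin (n + 1), i ≠ i' → S i j ω ≠ S i' j ω)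
    (j : Fin m) (b : ℝ) (hb : 0 ≤ b)
    (hlow : ∀ i : Fin (n + 1), ∀ᵐ ω ∂μ, b < lossFn S V j i lamMin ω)
    (Γ : Fin m → Ω → ℝ)
    (hΓsym : ∀ ℓ : Fin m, ℓ < j →
      ∃ φ : (Fin (n + 1) → (Fin m → ℝ) × (Fin m → ℝ)) → ℝ, Measurable φ ∧
        (∀ (π : Equiv.Perm (Fin (n + 1))) (d : Fin (n + 1) → (Fin m → ℝ) × (Fin m → ℝ)),
          φ (fun i => d (π i)) = φ d) ∧
        (∀ ω, Γ ℓ ω = φ (fun i => ((fun l => S i l ω), (fun l => V i l ω)))))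
    (hΓrange : ∀ ℓ : Fin m, ℓ < j → ∀ ω, Γ ℓ ω ∈ Icc (lamMin ℓ) (lamMax ℓ)) :
    (∀ᵐ ω ∂μ,
      b - Vmax j / ((n : ℝ) + 1)
        ≤ gSym S V j
            (Function.update (fun ℓ => Γ ℓ ω) j
              (USym S V lamMin lamMax j (fun ℓ => Γ ℓ ω) b ω)) ω) ∧
    b - Vmax j / ((n : ℝ) + 1)
      ≤ ∫ ω, lossFn S V j (Fin.last n)
          (Function.update (fun ℓ => Γ ℓ ω) j
            (USym S V lamMin lamMax j (fun ℓ => Γ ℓ ω) b ω)) ω ∂μ := by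
  set D : Ω → Sample m n := fun ω i => ((fun l => S i l ω), (fun l => V i l ω))
  have hD : Measurable D := by fun_prop
  have hrepr : ∀ l, ∃ φ : Sample m n → ℝ, Measurable φ ∧
      (∀ (π : Equiv.Perm (Fin (n + 1))) d, φ (fun k => d (π k)) = φ d) ∧
      (l < j → ∀ ω, Γ l ω = φ (D ω)) := fun l =>
    if hl : l < j then (hΓsym l hl).imp fun _ h => ⟨h.1, h.2.1, fun _ => h.2.2⟩
    else ⟨0, measurable_const, fun _ _ => rfl, fun h => absurd h hl⟩
  choose φ hφ hφπ hΓφ using hrepr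
  have hloss : ∀ i ω, lossFn S V j i (update (Γ · ω) j (USym S V lamMin lamMax j (Γ · ω) b ω)) ω
      = Sample.lossAtUSym lamMin lamMax j b φ i (D ω) := fun i ω => by
    rw [USym_congr S V j lamMin lamMax (fun l hl => hΓφ l hl ω)]
    exact lossFn_update_congr S V j (fun l hl => hΓφ l hl ω) i _ ω
  have hae : ∀ᵐ ω ∂μ, b - Vmax j / ((n : ℝ) + 1)
      ≤ gSym S V j (update (Γ · ω) j (USym S V lamMin lamMax j (Γ · ω) b ω)) ω := by
    filter_upwards [hdist j, ae_all_iff.2 fun i => hVbd i j, ae_all_iff.2 hlow]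
      with ω hinj hV hlow
    exact sub_le_gSym_update_USym S V j hb (fun l hl => (hΓrange l hl ω).1)
      (fun i i' => not_imp_not.1 (hinj i i')) (fun i => (hV i).2) hlow
  refine ⟨hae, ?_⟩
  simp only [hloss]
  refine le_integral_of_exchangeable hD hexch
    (Sample.measurable_lossAtUSym lamMin lamMax j b hφ)
    (Sample.lossAtUSym_perm lamMin lamMax j b hφπ) (fun i => ?_) ?_ (Fin.last n)
  · refine .of_bound
      ((Sample.measurable_lossAtUSym lamMin lamMax j b hφ i).comp hD).aestronglyMeasurable
      (max |Vmin j| |Vmax j|) ?_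
    filter_upwards [hVbd i j] with ω hV
    rw [Real.norm_eq_abs, ← hloss]
    exact (abs_lossFn_le S V j i _ ω).trans (abs_le_max_abs_abs hV.1 hV.2)
  · filter_upwards [hae] with ω h
    simpa only [gSym_eq_sum_div, hloss] using h

/-- Lemma: bounded jumps and risk lower bound at symmetric arguments.  Fix `j`
and `β ≥ 0` with `L_j^{(i)}(λ^min) > β` a.s. for all `i`.  Then for symmetric `Λ_ℓ`-valued
functions `Γ_1,…,Γ_{j−1}` of the `n+1` datapoints: almost surely
`g_j^sym(U_j^sym(Γ_{1:(j−1)}; β); Γ_{1:(j−1)}) ≥ β − Vmax_j/(n+1)`, and consequently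
`E[L_j^{(n+1)}(Γ_{1:(j−1)}, U_j^sym(Γ_{1:(j−1)}; β))] ≥ β − Vmax_j/(n+1)`. -/
theorem bounded_jumps_risk_lower_bound
    {Ω : Type*} [MeasurableSpace Ω] (μ : Measure Ω) [IsProbabilityMeasure μ]
    (m n : ℕ) (hm : 1 ≤ m) (hn : 1 ≤ n)
    (S V : Fin (n + 1) → Fin m → Ω → ℝ)
    (hSmeas : ∀ i j, Measurable (S i j)) (hVmeas : ∀ i j, Measurable (V i j))
    (lamMin lamMax : Fin m → ℝ) (hΛ : ∀ j, lamMin j ≤ lamMax j)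
    (β : Fin m → ℝ) (hβ : ∀ j, 0 ≤ β j)
    (Vmin Vmax : Fin m → ℝ) (hVmin0 : ∀ j, 0 ≤ Vmin j) (hVle : ∀ j, Vmin j ≤ Vmax j)
    (hVbd : ∀ i j, ∀ᵐ ω ∂μ, V i j ω ∈ Icc (Vmin j) (Vmax j))
    (hexch : ∀ π : Equiv.Perm (Fin (n + 1)),
      Measure.map (fun ω => fun i : Fin (n + 1) =>
          ((fun j => S (π i) j ω), (fun j => V (π i) j ω))) μ
        = Measure.map (fun ω => fun i : Fin (n + 1) =>
          ((fun j => S i j ω), (fun j => V i j ω))) μ)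
    (hfeas : ∀ (j : Fin m) (i : Fin (n + 1)), ∀ᵐ ω ∂μ, lossFn S V j i lamMax ω ≤ β j)
    -- distinct continuous scores
    (hdist : ∀ j : Fin m, ∀ᵐ ω ∂μ,
      ∀ i i' : Fin (n + 1), i ≠ i' → S i j ω ≠ S i' j ω)
    (j : Fin m) (b : ℝ) (hb : 0 ≤ b)
    (hlow : ∀ i : Fin (n + 1), ∀ᵐ ω ∂μ, b < lossFn S V j i lamMin ω)
    (Γ : Fin m → Ω → ℝ)
    (hΓsym : ∀ ℓ : Fin m, ℓ < j →
      ∃ φ : (Fin (n + 1) → (Fin m → ℝ) × (Fin m → ℝ)) → ℝ, Measurable φ ∧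
        (∀ (π : Equiv.Perm (Fin (n + 1))) (d : Fin (n + 1) → (Fin m → ℝ) × (Fin m → ℝ)),
          φ (fun i => d (π i)) = φ d) ∧
        (∀ ω, Γ ℓ ω = φ (fun i => ((fun l => S i l ω), (fun l => V i l ω)))))
    (hΓrange : ∀ ℓ : Fin m, ℓ < j → ∀ ω, Γ ℓ ω ∈ Icc (lamMin ℓ) (lamMax ℓ)) :
    (∀ᵐ ω ∂μ,
      b - Vmax j / ((n : ℝ) + 1)
        ≤ gSym S V j
            (Function.update (fun ℓ => Γ ℓ ω) j
              (USym S V lamMin lamMax j (fun ℓ => Γ ℓ ω) b ω)) ω) ∧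
    b - Vmax j / ((n : ℝ) + 1)
      ≤ ∫ ω, lossFn S V j (Fin.last n)
          (Function.update (fun ℓ => Γ ℓ ω) j
            (USym S V lamMin lamMax j (fun ℓ => Γ ℓ ω) b ω)) ω ∂μ :=
  bounded_jumps_risk_lower_bound_general μ m n S V hSmeas hVmeas lamMin lamMax Vmin Vmax hVbd hexch
    hdist j b hb hlow Γ hΓsym hΓrange
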